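/- arXiv:1705.09210 — 3 statements merged into one kernel-verified Lean document; each statement's English description precedes it below -/
import Mathlib

section
/- Let x̃₁, …, x̃_m ∈ ℝⁿ and suppose x_k = Σ_{i=1}^m λᵢ x̃ᵢ with λᵢ ≥ 0 and Σ_{i=1}^m λᵢ = 1 minimizes f over the convex hull of {x̃₁, …, x̃_m}. If for some index j one has (2Qx_k + c)ᵀ(x̃ⱼ − x_k) > 0, then λⱼ = 0. -/
open Matrix Filter Topology

/-!
At a minimiser `x` of `f` over a convex set, the first-order condition gives
`g ⬝ᵥ (y - x) ≥ 0` for every `y` in the set, where `g = 2Qx + c`; in particular this holds at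
every vertex `x̃ᵢ`. Since `x = ∑ λᵢ x̃ᵢ` with `∑ λᵢ = 1`, the nonnegative terms
`λᵢ (g ⬝ᵥ (x̃ᵢ - x))` sum to `g ⬝ᵥ (x - x) = 0`, so each vanishes, and `λⱼ = 0` wherever
`g ⬝ᵥ (x̃ⱼ - x) > 0`.
-/

section
variable {ι R : Type*} [Fintype ι] [CommRing R]

lemma Matrix.IsSymm.dotProduct_mulVec_comm {Q : Matrix ι ι R} (hQ : Q.IsSymm) (u v : ι → R) :
    u ⬝ᵥ (Q *ᵥ v) = v ⬝ᵥ (Q *ᵥ u) := by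
  rw [dotProduct_mulVec, dotProduct_comm, ← mulVec_transpose, hQ.eq]

lemma Matrix.IsSymm.quadratic_add_smul {Q : Matrix ι ι R} (hQ : Q.IsSymm) (c x d : ι → R)
    (t : R) :
    (x + t • d) ⬝ᵥ (Q *ᵥ (x + t • d)) + c ⬝ᵥ (x + t • d) =
      x ⬝ᵥ (Q *ᵥ x) + c ⬝ᵥ x + t * (((2 : R) • (Q *ᵥ x) + c) ⬝ᵥ d) +
        t ^ 2 * (d ⬝ᵥ (Q *ᵥ d)) := by
  simp only [mulVec_add, mulVec_smul, dotProduct_add, add_dotProduct, smul_dotProduct,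
    dotProduct_smul, smul_eq_mul, hQ.dotProduct_mulVec_comm d x, dotProduct_comm (Q *ᵥ x) d]
  ring

end

lemma nonneg_of_forall_mul_add_sq_mul_nonneg {a b : ℝ}
    (h : ∀ t ∈ Set.Ioc (0 : ℝ) 1, 0 ≤ t * a + t ^ 2 * b) : 0 ≤ a := by
  have hlim : Tendsto (fun t => a + t * b) (𝓝[>] 0) (𝓝 a) := by
    have hcont : Continuous fun t : ℝ => a + t * b := by fun_prop
    simpa using (hcont.tendsto 0).mono_left nhdsWithin_le_nhds
  refine ge_of_tendsto hlim ?_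
  filter_upwards [Ioc_mem_nhdsGT (zero_lt_one' ℝ)] with t ht
  have hprod : 0 ≤ t * (a + t * b) := by linarith [h t ht]
  exact (mul_nonneg_iff_of_pos_left ht.1).mp hprod

lemma Matrix.IsSymm.gradient_dotProduct_sub_nonneg_of_isMinOn {ι : Type*} [Fintype ι]
    {Q : Matrix ι ι ℝ} (hQ : Q.IsSymm) (c : ι → ℝ) {s : Set (ι → ℝ)} (hs : Convex ℝ s)
    {x y : ι → ℝ} (hx : x ∈ s) (hy : y ∈ s)
    (hmin : IsMinOn (fun z => z ⬝ᵥ (Q *ᵥ z) + c ⬝ᵥ z) s x) :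
    0 ≤ ((2 : ℝ) • (Q *ᵥ x) + c) ⬝ᵥ (y - x) := by
  refine nonneg_of_forall_mul_add_sq_mul_nonneg (b := (y - x) ⬝ᵥ (Q *ᵥ (y - x))) fun t ht => ?_
  have hmem : x + t • (y - x) ∈ s := hs.add_smul_sub_mem hx hy (Set.Ioc_subset_Icc_self ht)
  have hle := isMinOn_iff.mp hmin _ hmem
  rw [hQ.quadratic_add_smul] at hle
  linarith

lemma weight_eq_zero_of_pos_of_forall_nonneg {ι E : Type*} [Fintype ι] [AddCommGroup E]
    [Module ℝ E] (φ : E →ₗ[ℝ] ℝ) {w : ι → ℝ} {p : ι → E} {x : E} (hw₀ : ∀ i, 0 ≤ w i)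
    (hw₁ : ∑ i, w i = 1) (hx : x = ∑ i, w i • p i) (hφ : ∀ i, 0 ≤ φ (p i - x)) {j : ι}
    (hj : 0 < φ (p j - x)) : w j = 0 := by
  have hsum : ∑ i, w i * φ (p i - x) = 0 := by
    have hbary : ∑ i, w i • (p i - x) = 0 := by
      simp only [smul_sub, Finset.sum_sub_distrib, ← Finset.sum_smul, hw₁, one_smul, ← hx,
        sub_self]
    simpa only [map_sum, map_smul, smul_eq_mul, map_zero] using congrArg φ hbary
  have hterm := (Finset.sum_eq_zero_iff_of_nonneg fun i _ => mul_nonneg (hw₀ i) (hφ i)).mp hsum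
    j (Finset.mem_univ j)
  exact (mul_eq_zero.mp hterm).resolve_right hj.ne'

/-- Every vertex of the master set violating the shrinking-cut condition
has zero weight in the convex combination expressing the master solution. -/
theorem stmt4 {n m : ℕ} (Q : Matrix (Fin n) (Fin n) ℝ) (hQ : Q.PosSemidef) (c : Fin n → ℝ)
    (xt : Fin m → (Fin n → ℝ)) (lam : Fin m → ℝ)
    (hlam : ∀ i, 0 ≤ lam i) (hsum : ∑ i, lam i = 1)
    (xk : Fin n → ℝ) (hxk : xk = ∑ i, lam i • xt i)
    (hmin : ∀ y ∈ convexHull ℝ (Set.range xt),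
      xk ⬝ᵥ (Q *ᵥ xk) + c ⬝ᵥ xk ≤ y ⬝ᵥ (Q *ᵥ y) + c ⬝ᵥ y)
    (j : Fin m) (hj : 0 < ((2 : ℝ) • (Q *ᵥ xk) + c) ⬝ᵥ (xt j - xk)) :
    lam j = 0 := by
  have hQsymm : Q.IsSymm := isHermitian_iff_isSymm.mp hQ.isHermitian
  have hvertex : ∀ i, xt i ∈ convexHull ℝ (Set.range xt) :=
    fun i => subset_convexHull ℝ _ (Set.mem_range_self i)
  have hxk_mem : xk ∈ convexHull ℝ (Set.range xt) :=
    hxk ▸ (convex_convexHull ℝ _).sum_mem (fun i _ => hlam i) hsum fun i _ => hvertex i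
  exact weight_eq_zero_of_pos_of_forall_nonneg (dotProductBilin ℝ ℝ ((2 : ℝ) • (Q *ᵥ xk) + c))
    hlam hsum hxk (fun i => hQsymm.gradient_dotProduct_sub_nonneg_of_isMinOn c
      (convex_convexHull ℝ _) hxk_mem (hvertex i) (isMinOn_iff.mpr hmin)) hj
end

section
/- Let S ⊆ ℝⁿ be a convex set, let x_k, x̃_k ∈ S satisfy (2Qx_k + c)ᵀ(x̃_k − x_k) < 0, and let x_{k+1} be a minimizer of f over S. Then f(x_{k+1}) < f(x_k). -/
open Matrix Filter Topology

/-! Along the segment from `x_k` towards `x̃_k`, which stays in `S` by convexity, the objective is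
the quadratic `f(x_k) + t g + t² a` in the step `t` with slope `g = ∇f(x_k)ᵀ(x̃_k - x_k) < 0`, so it
drops below `f(x_k)` for small `t > 0`; the minimum over `S` is at most that value. -/

section QuadraticObjective

variable {ι R : Type*} [Fintype ι]

def quadraticObjective [CommRing R] (Q : Matrix ι ι R) (c x : ι → R) : R :=
  x ⬝ᵥ (Q *ᵥ x) + c ⬝ᵥ x

theorem quadraticObjective_add_smul [CommRing R] {Q : Matrix ι ι R} (hQ : Q.IsSymm)
    (c x d : ι → R) (t : R) :
    quadraticObjective Q c (x + t • d) = quadraticObjective Q c x +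
      t * (((2 : R) • (Q *ᵥ x) + c) ⬝ᵥ d) + t ^ 2 * (d ⬝ᵥ (Q *ᵥ d)) := by
  have hxd : x ⬝ᵥ (Q *ᵥ d) = (Q *ᵥ x) ⬝ᵥ d := by
    rw [← dotProduct_transpose_mulVec, hQ.eq, dotProduct_comm]
  have hdx : d ⬝ᵥ (Q *ᵥ x) = (Q *ᵥ x) ⬝ᵥ d := dotProduct_comm _ _
  simp only [quadraticObjective, mulVec_add, mulVec_smul, dotProduct_add, add_dotProduct,
    dotProduct_smul, smul_dotProduct, smul_eq_mul]
  linear_combination t * hxd + t * hdx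

theorem exists_mul_add_sq_mul_neg {b : ℝ} (hb : b < 0) (a : ℝ) :
    ∃ t : ℝ, 0 < t ∧ t ≤ 1 ∧ t * b + t ^ 2 * a < 0 := by
  have hlim : Tendsto (fun t : ℝ => b + t * a) (𝓝[>] 0) (𝓝 b) :=
    tendsto_nhdsWithin_of_tendsto_nhds <|
      (by fun_prop : Continuous fun t : ℝ => b + t * a).tendsto' 0 b (by simp)
  obtain ⟨t, hneg, ht⟩ :=
    ((hlim.eventually_lt_const hb).and (Ioo_mem_nhdsGT zero_lt_one)).exists
  refine ⟨t, ht.1, ht.2.le, ?_⟩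
  calc t * b + t ^ 2 * a = t * (b + t * a) := by ring
    _ < 0 := mul_neg_of_pos_of_neg ht.1 hneg

theorem exists_mem_quadraticObjective_lt_of_descent {Q : Matrix ι ι ℝ} (hQ : Q.IsSymm)
    (c : ι → ℝ) {S : Set (ι → ℝ)} (hS : Convex ℝ S) {x x' : ι → ℝ} (hx : x ∈ S) (hx' : x' ∈ S)
    (hdesc : ((2 : ℝ) • (Q *ᵥ x) + c) ⬝ᵥ (x' - x) < 0) :
    ∃ y ∈ S, quadraticObjective Q c y < quadraticObjective Q c x := by
  obtain ⟨t, ht0, ht1, hneg⟩ := exists_mul_add_sq_mul_neg hdesc ((x' - x) ⬝ᵥ (Q *ᵥ (x' - x)))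
  refine ⟨x + t • (x' - x), hS.add_smul_sub_mem hx hx' ⟨ht0.le, ht1⟩, ?_⟩
  rw [quadraticObjective_add_smul hQ]
  linarith

end QuadraticObjective

theorem stmt5_general {n : ℕ} (Q : Matrix (Fin n) (Fin n) ℝ) (hQ : Q.PosSemidef) (c : Fin n → ℝ)
    (S : Set (Fin n → ℝ)) (hS : Convex ℝ S)
    (xk xtk : Fin n → ℝ) (hxk : xk ∈ S) (hxtk : xtk ∈ S)
    (hdesc : ((2 : ℝ) • (Q *ᵥ xk) + c) ⬝ᵥ (xtk - xk) < 0)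
    (xk1 : Fin n → ℝ)
    (hmin : ∀ y ∈ S, xk1 ⬝ᵥ (Q *ᵥ xk1) + c ⬝ᵥ xk1 ≤ y ⬝ᵥ (Q *ᵥ y) + c ⬝ᵥ y) :
    xk1 ⬝ᵥ (Q *ᵥ xk1) + c ⬝ᵥ xk1 < xk ⬝ᵥ (Q *ᵥ xk) + c ⬝ᵥ xk := by
  obtain ⟨y, hyS, hy⟩ := exists_mem_quadraticObjective_lt_of_descent
    (isHermitian_iff_isSymm.mp hQ.isHermitian) c hS hxk hxtk hdesc
  exact (hmin y hyS).trans_lt hy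

/-- Strict decrease between consecutive master solutions: if `x_k, x̃_k ∈ S`
with `∇f(x_k)ᵀ(x̃_k - x_k) < 0` and `x_{k+1}` minimizes `f` over the convex
set `S`, then `f(x_{k+1}) < f(x_k)`. -/
theorem stmt5 {n : ℕ} (Q : Matrix (Fin n) (Fin n) ℝ) (hQ : Q.PosSemidef) (c : Fin n → ℝ)
    (S : Set (Fin n → ℝ)) (hS : Convex ℝ S)
    (xk xtk : Fin n → ℝ) (hxk : xk ∈ S) (hxtk : xtk ∈ S)
    (hdesc : ((2 : ℝ) • (Q *ᵥ xk) + c) ⬝ᵥ (xtk - xk) < 0)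
    (xk1 : Fin n → ℝ) (hxk1 : xk1 ∈ S)
    (hmin : ∀ y ∈ S, xk1 ⬝ᵥ (Q *ᵥ xk1) + c ⬝ᵥ xk1 ≤ y ⬝ᵥ (Q *ᵥ y) + c ⬝ᵥ y) :
    xk1 ⬝ᵥ (Q *ᵥ xk1) + c ⬝ᵥ xk1 < xk ⬝ᵥ (Q *ᵥ xk) + c ⬝ᵥ xk :=
  stmt5_general Q hQ c S hS xk xtk hxk hxtk hdesc xk1 hmin
end

section
/- Let Q be a symmetric positive definite n×n real matrix, c ∈ ℝⁿ, and f(x) = xᵀQx + cᵀx. Let d₀, …, d_{n−1} ∈ ℝⁿ be nonzero mutually Q-conjugate directions (dᵢᵀQdⱼ = 0 for i ≠ j). Starting from any x₀ ∈ ℝⁿ, define iterates by x_{k+1} = x_k + α_k d_k where α_k = −(2Qx_k + c)ᵀd_k / (2 d_kᵀQ d_k) is the exact minimizer of α ↦ f(x_k + α d_k). Then x_n is the global minimizer of f over ℝⁿ: f(x_n) ≤ f(y) for all y ∈ ℝⁿ. -/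
/-!
Write `g x = 2 Q x + c` for the gradient of `f`. The exact line search along `d k` makes
`g (x (k+1))` orthogonal to `d k`, and every later step moves `g` by a multiple of `Q (d j)` with
`j ≠ k`, which is orthogonal to `d k` by conjugacy; so `g (x n)` is orthogonal to every direction.
Conjugate nonzero directions are orthogonal for the inner product given by `Q`, hence linearly
independent, and `n` of them span `ℝⁿ`; thus `g (x n) = 0`. Finally
`f (x + z) = f x + g x ⬝ z + zᵀ Q z` and `zᵀ Q z ≥ 0`, so a critical point is a global minimizer.
-/

open Matrix

namespace Matrix

section Quadratic

variable {m : Type*} [Fintype m]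

lemma IsSymm.dotProduct_mulVec_comm_s12 {R : Type*} [CommSemiring R] {Q : Matrix m m R}
    (hQ : Q.IsSymm) (u v : m → R) : u ⬝ᵥ (Q *ᵥ v) = v ⬝ᵥ (Q *ᵥ u) := by
  rw [dotProduct_mulVec, ← mulVec_transpose, hQ.eq, dotProduct_comm]

lemma eq_zero_of_dotProduct_eq_zero_of_span_eq_top {R ι : Type*} [CommSemiring R]
    {v : ι → m → R} (hv : Submodule.span R (Set.range v) = ⊤) {g : m → R}
    (hg : ∀ i, g ⬝ᵥ v i = 0) : g = 0 :=
  dotProduct_eq_zero g fun w =>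
    LinearMap.congr_fun (LinearMap.ext_on_range hv (f := dotProductBilin R R g) (g := 0) hg) w

lemma linearIndependent_of_pairwise_dotProduct_mulVec_eq_zero {ι : Type*}
    {Q : Matrix m m ℝ} (hQ : Q.PosDef) {d : ι → m → ℝ} (hd : ∀ i, d i ≠ 0)
    (hconj : Pairwise fun i j => d i ⬝ᵥ (Q *ᵥ d j) = 0) : LinearIndependent ℝ d := by
  classical
  exact LinearMap.BilinForm.linearIndependent_of_iIsOrtho (B := Matrix.toBilin' Q)
    (fun i j hij => by simpa [Function.onFun, toBilin'_apply'] using hconj hij)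
    (fun i => by simpa [toBilin'_apply'] using (hQ.dotProduct_mulVec_pos (hd i)).ne')

variable (Q : Matrix m m ℝ) (c : m → ℝ)

def quadraticFun (x : m → ℝ) : ℝ := x ⬝ᵥ (Q *ᵥ x) + c ⬝ᵥ x

def quadraticGrad (x : m → ℝ) : m → ℝ := (2 : ℝ) • (Q *ᵥ x) + c

/-- The minimizer of `α ↦ quadraticFun Q c (x + α • v)`. -/
noncomputable def exactStepLength (x v : m → ℝ) : ℝ :=
  -(quadraticGrad Q c x ⬝ᵥ v) / (2 * (v ⬝ᵥ (Q *ᵥ v)))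

variable {Q c}

lemma quadraticFun_add (hQ : Q.IsSymm) (x z : m → ℝ) :
    quadraticFun Q c (x + z) = quadraticFun Q c x + quadraticGrad Q c x ⬝ᵥ z + z ⬝ᵥ (Q *ᵥ z) := by
  have hcomm := hQ.dotProduct_mulVec_comm_s12 z x
  simp only [quadraticFun, quadraticGrad, mulVec_add, dotProduct_add, add_dotProduct,
    smul_dotProduct, smul_eq_mul, dotProduct_comm (Q *ᵥ x) z]
  linarith

lemma quadraticFun_le_of_quadraticGrad_eq_zero (hQ : Q.PosSemidef) {x : m → ℝ}
    (hx : quadraticGrad Q c x = 0) (y : m → ℝ) : quadraticFun Q c x ≤ quadraticFun Q c y := by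
  have hsymm : Q.IsSymm := isHermitian_iff_isSymm.mp hQ.isHermitian
  have hexpand := quadraticFun_add (c := c) hsymm x (y - x)
  rw [add_sub_cancel, hx, zero_dotProduct] at hexpand
  have hnonneg := hQ.dotProduct_mulVec_nonneg (y - x)
  rw [star_trivial] at hnonneg
  linarith

lemma quadraticGrad_add_smul (x v : m → ℝ) (α : ℝ) :
    quadraticGrad Q c (x + α • v) = quadraticGrad Q c x + (2 * α) • (Q *ᵥ v) := by
  simp only [quadraticGrad, mulVec_add, mulVec_smul]
  module

lemma quadraticGrad_add_exactStepLength_smul_dotProduct {v : m → ℝ}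
    (hv : v ⬝ᵥ (Q *ᵥ v) ≠ 0) (x : m → ℝ) :
    quadraticGrad Q c (x + exactStepLength Q c x v • v) ⬝ᵥ v = 0 := by
  rw [quadraticGrad_add_smul, add_dotProduct, smul_dotProduct, dotProduct_comm (Q *ᵥ v),
    exactStepLength, smul_eq_mul]
  field_simp
  ring

lemma quadraticGrad_add_smul_dotProduct_of_conj {v w : m → ℝ} (hvw : w ⬝ᵥ (Q *ᵥ v) = 0)
    (x : m → ℝ) (α : ℝ) :
    quadraticGrad Q c (x + α • v) ⬝ᵥ w = quadraticGrad Q c x ⬝ᵥ w := by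
  rw [quadraticGrad_add_smul, add_dotProduct, smul_dotProduct, dotProduct_comm (Q *ᵥ v), hvw,
    smul_zero, add_zero]

theorem quadraticGrad_dotProduct_eq_zero_of_conjugate_steps {N : ℕ} {d : Fin N → m → ℝ}
    (hd : ∀ i, d i ⬝ᵥ (Q *ᵥ d i) ≠ 0) (hconj : Pairwise fun i j => d i ⬝ᵥ (Q *ᵥ d j) = 0)
    {x : ℕ → m → ℝ} (hstep : ∀ k : Fin N, x (k + 1) = x k + exactStepLength Q c (x k) (d k) • d k)
    (k : Fin N) {j : ℕ} (hkj : k < j) (hjN : j ≤ N) : quadraticGrad Q c (x j) ⬝ᵥ d k = 0 := by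
  induction j, hkj using Nat.le_induction with
  | base => rw [hstep k]; exact quadraticGrad_add_exactStepLength_smul_dotProduct (hd k) _
  | succ j hkj ih =>
    have hj : j < N := by omega
    have hne : k ≠ ⟨j, hj⟩ := Fin.ne_of_lt (show (k : ℕ) < j by omega)
    rw [show x (j + 1) = _ from hstep ⟨j, hj⟩,
      quadraticGrad_add_smul_dotProduct_of_conj (hconj hne)]
    exact ih hj.le

end Quadratic

end Matrix

/-- The conjugate directions method with exact line searches minimizes the
convex quadratic `f(x) = xᵀQx + cᵀx` (with `Q` symmetric positive definite)
in at most `n` steps: after `n` exact-line-search steps along nonzero mutually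
`Q`-conjugate directions, `x_n` is the global minimizer of `f`. -/
theorem stmt12 {n : ℕ} (Q : Matrix (Fin n) (Fin n) ℝ) (hQ : Q.PosDef) (c : Fin n → ℝ)
    (d : Fin n → (Fin n → ℝ)) (hd : ∀ i, d i ≠ 0)
    (hconj : ∀ i j, i ≠ j → d i ⬝ᵥ (Q *ᵥ d j) = 0)
    (x : ℕ → (Fin n → ℝ))
    (hstep : ∀ k : Fin n,
      x (k.val + 1) = x k.val +
        (-(((2 : ℝ) • (Q *ᵥ x k.val) + c) ⬝ᵥ d k) / (2 * (d k ⬝ᵥ (Q *ᵥ d k)))) • d k) :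
    ∀ y : Fin n → ℝ,
      (x n) ⬝ᵥ (Q *ᵥ x n) + c ⬝ᵥ x n ≤ y ⬝ᵥ (Q *ᵥ y) + c ⬝ᵥ y := by
  have hQd : ∀ i, d i ⬝ᵥ (Q *ᵥ d i) ≠ 0 := fun i => by
    simpa using (hQ.dotProduct_mulVec_pos (hd i)).ne'
  have hspan : Submodule.span ℝ (Set.range d) = ⊤ :=
    (linearIndependent_of_pairwise_dotProduct_mulVec_eq_zero hQ hd
      fun i j => hconj i j).span_eq_top_of_card_eq_finrank' (by simp)
  have hgrad : quadraticGrad Q c (x n) = 0 :=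
    eq_zero_of_dotProduct_eq_zero_of_span_eq_top hspan fun k =>
      quadraticGrad_dotProduct_eq_zero_of_conjugate_steps hQd (fun i j => hconj i j) hstep k
        k.is_lt le_rfl
  exact quadraticFun_le_of_quadraticGrad_eq_zero hQ.posSemidef hgrad
end
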